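/- arXiv:2403.00968 — 4 statements merged into one kernel-verified Lean document; each statement's English description precedes it below -/
import Mathlib

section
/- Let Θ ⊆ ℝ^d, let π₀ be a (prior) probability measure on Θ, and fix data y. Let h(y,·): Θ → ℝ, let g(·,y;·): Z × Θ → ℝ be a loss function over a nonempty set Z, and let g†(·,y;·): E × Θ → ℝ be a dual function on a nonempty feasible set E satisfying weak duality: g†(α,y;λ) ≤ inf_{ζ∈Z} g(ζ,y;λ) for every α ∈ E and every λ ∈ Θ. Assume λ ↦ exp{−h(y,λ)} exp{−inf_{ζ} g(ζ,y;λ)} is measurable. If there exists α̃ ∈ E such that ∫_Θ exp{−h(y,λ)} exp{−g†(α̃,y;λ)} π₀(dλ) < ∞, then ∫_Θ exp{−h(y,λ)} exp{−inf_{ζ} g(ζ,y;λ)} π₀(dλ) < ∞; that is, the bridged posterior density kernel λ ↦ exp{−h(y,λ)−inf_ζ g(ζ,y;λ)} π₀(λ) is integrable and the bridged posterior is proper. -/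
open MeasureTheory Real

/-!
Weak duality gives `exp (-inf_ζ g ζ λ) ≤ exp (-g† α̃ λ)` for every `λ ∈ Θ`, so the bridged
posterior kernel is dominated on `Θ` by the integrable envelope built from the dual point `α̃`.
-/

/-- No measurability of `s` is needed: the set where the bound holds is null measurable for
`μ.restrict s`. -/
theorem MeasureTheory.IntegrableOn.mono_of_forall_mem {α F : Type*} [MeasurableSpace α]
    [NormedAddCommGroup F] {μ : Measure α} {s : Set α} {f : α → F} {g : α → ℝ}
    (hg : IntegrableOn g s μ) (hf : AEStronglyMeasurable f (μ.restrict s))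
    (hfg : ∀ x ∈ s, ‖f x‖ ≤ g x) : IntegrableOn f s μ := by
  refine Integrable.mono' hg hf ?_
  have hbound : NullMeasurableSet {x | ‖f x‖ ≤ g x} (μ.restrict s) :=
    nullMeasurableSet_le hf.norm.aemeasurable hg.1.aemeasurable
  rw [ae_restrict_iff₀ hbound]
  exact Filter.Eventually.of_forall hfg

theorem bridged_posterior_propriety_general
    {d : ℕ} {Z E : Type*}
    (Θ : Set (Fin d → ℝ)) (π₀ : Measure (Fin d → ℝ))
    (h : (Fin d → ℝ) → ℝ) (g : Z → (Fin d → ℝ) → ℝ) (gd : E → (Fin d → ℝ) → ℝ)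
    (weak_duality : ∀ α : E, ∀ lam ∈ Θ, gd α lam ≤ ⨅ ζ : Z, g ζ lam)
    (hmeas : AEStronglyMeasurable
      (fun lam => Real.exp (-h lam) * Real.exp (-(⨅ ζ : Z, g ζ lam))) (π₀.restrict Θ))
    (hint : ∃ αt : E,
      IntegrableOn (fun lam => Real.exp (-h lam) * Real.exp (-gd αt lam)) Θ π₀) :
    IntegrableOn (fun lam => Real.exp (-h lam) * Real.exp (-(⨅ ζ : Z, g ζ lam))) Θ π₀ := by
  obtain ⟨αt, henvelope⟩ := hint
  refine henvelope.mono_of_forall_mem hmeas fun lam hlam => ?_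
  rw [Real.norm_of_nonneg (by positivity)]
  gcongr
  exact weak_duality αt lam hlam

/-- Theorem 1, duality bound for posterior propriety.
If a dual function `gd` satisfies weak duality `gd α λ ≤ inf_ζ g ζ λ` on the
parameter set `Θ`, and for some feasible dual point `αt` the envelope
`λ ↦ exp(-h λ) exp(-gd αt λ)` is integrable over `Θ` with respect to the prior `π₀`,
then the bridged posterior kernel `λ ↦ exp(-h λ) exp(-inf_ζ g ζ λ)` is integrable
over `Θ`, i.e. the bridged posterior is proper. -/
theorem bridged_posterior_propriety
    {d : ℕ} {Z E : Type*} [Nonempty Z] [Nonempty E]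
    (Θ : Set (Fin d → ℝ)) (π₀ : Measure (Fin d → ℝ)) [IsProbabilityMeasure π₀]
    (h : (Fin d → ℝ) → ℝ) (g : Z → (Fin d → ℝ) → ℝ) (gd : E → (Fin d → ℝ) → ℝ)
    (weak_duality : ∀ α : E, ∀ lam ∈ Θ, gd α lam ≤ ⨅ ζ : Z, g ζ lam)
    (hmeas : AEStronglyMeasurable
      (fun lam => Real.exp (-h lam) * Real.exp (-(⨅ ζ : Z, g ζ lam))) (π₀.restrict Θ))
    (hint : ∃ αt : E,
      IntegrableOn (fun lam => Real.exp (-h lam) * Real.exp (-gd αt lam)) Θ π₀) :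
    IntegrableOn (fun lam => Real.exp (-h lam) * Real.exp (-(⨅ ζ : Z, g ζ lam))) Θ π₀ :=
  bridged_posterior_propriety_general Θ π₀ h g gd weak_duality hmeas hint
end

section
/- Let l: U × ℝ^p → ℝ have continuous second derivatives on an open set U × W ⊆ ℝ^d × ℝ^p, let λ₀ ∈ U, let ẑ: U → ℝ^p be twice differentiable with ẑ(λ₀) ∈ W, and suppose the first-order condition ∂l(λ,ζ)/∂ζ |_{ζ=ẑ(λ)} = 0 holds for all λ ∈ U. If the full Hessian −l''(λ₀, ẑ(λ₀)) (a (d+p)×(d+p) matrix of second derivatives in (λ,ζ)) is positive definite, then the profiled function l̂(λ) = l(λ, ẑ(λ)) satisfies l̂''(λ₀) = [I_d ẑ'(λ₀)⊤] l''(λ₀, ẑ(λ₀)) [I_d ; ẑ'(λ₀)], and −l̂''(λ₀) is positive definite. -/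
/-!
By the chain rule and the first-order condition, `l̂'(t) v = ∂_λ l(t, ẑ t) v` for `t` near `λ₀`
(the envelope theorem), so `l̂''(λ₀)(u, v) = l''(u, ẑ'u)(v, 0)`. The remaining term
`l''(u, ẑ'u)(0, ẑ'v)` is the derivative along the graph of `t ↦ ∂_ζ l(t, ẑ t) (ẑ'v)`, which
vanishes identically; so no second derivative of `ẑ` enters. Negative definiteness of `l̂''(λ₀)`
then follows from that of `l''` because `u ↦ (u, ẑ'u)` is injective.
-/

open Filter Topology

section Profile

variable {𝕜 : Type*} [NontriviallyNormedField 𝕜]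
  {E F G H : Type*} [NormedAddCommGroup E] [NormedSpace 𝕜 E] [NormedAddCommGroup F]
  [NormedSpace 𝕜 F] [NormedAddCommGroup G] [NormedSpace 𝕜 G]
  [NormedAddCommGroup H] [NormedSpace 𝕜 H]

theorem fderiv_clm_apply_const {c : E → F →L[𝕜] G} {x : E} (hc : DifferentiableAt 𝕜 c x)
    (w : F) (u : E) : fderiv 𝕜 (fun y => c y w) x u = fderiv 𝕜 c x u w := by
  simp [fderiv_clm_apply hc (differentiableAt_const w)]

theorem fderiv_comp_graph_apply {Φ : E × F → H} {z : E → F} {t : E}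
    (hΦ : DifferentiableAt 𝕜 Φ (t, z t)) (hz : DifferentiableAt 𝕜 z t) (v : E) :
    fderiv 𝕜 (fun s => Φ (s, z s)) t v = fderiv 𝕜 Φ (t, z t) (v, fderiv 𝕜 z t v) := by
  have := (hΦ.hasFDerivAt.comp t ((hasFDerivAt_id t).prodMk hz.hasFDerivAt)).fderiv
  simp only [id_eq, Function.comp_def] at this
  simp only [this, ContinuousLinearMap.comp_apply, ContinuousLinearMap.prod_apply,
    ContinuousLinearMap.id_apply]

theorem fderiv_apply_zero_prod {L : E × F → G} {x : E} {y : F}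
    (hL : DifferentiableAt 𝕜 L (x, y)) (m : F) :
    fderiv 𝕜 L (x, y) (0, m) = fderiv 𝕜 (fun ζ => L (x, ζ)) y m := by
  have := (hL.hasFDerivAt.comp y (hasFDerivAt_prodMk_right x y)).fderiv
  simp only [Function.comp_def] at this
  simp only [this, ContinuousLinearMap.comp_apply, ContinuousLinearMap.inr_apply]

theorem fderiv_apply_prod_eq_of_partial_eq_zero {L : E × F → G} {x : E} {y : F}
    (hL : DifferentiableAt 𝕜 L (x, y)) (hstat : fderiv 𝕜 (fun ζ => L (x, ζ)) y = 0)
    (v : E) (m : F) : fderiv 𝕜 L (x, y) (v, m) = fderiv 𝕜 L (x, y) (v, 0) := by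
  rw [← add_zero v, ← zero_add m, ← Prod.mk_add_mk, map_add, fderiv_apply_zero_prod hL, hstat]
  simp

variable {L : E × F → G} {z : E → F} {t₀ : E}

theorem fderiv_profile_eventuallyEq (hL : ∀ᶠ t in 𝓝 t₀, DifferentiableAt 𝕜 L (t, z t))
    (hstat : ∀ᶠ t in 𝓝 t₀, fderiv 𝕜 (fun ζ => L (t, ζ)) (z t) = 0)
    (hz : ∀ᶠ t in 𝓝 t₀, DifferentiableAt 𝕜 z t) (v : E) :
    (fun t => fderiv 𝕜 (fun s => L (s, z s)) t v) =ᶠ[𝓝 t₀]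
      fun t => fderiv 𝕜 L (t, z t) (v, 0) := by
  filter_upwards [hL, hstat, hz] with t hLt hstatt hzt
  rw [fderiv_comp_graph_apply hLt hzt, fderiv_apply_prod_eq_of_partial_eq_zero hLt hstatt]

theorem fderiv_fderiv_apply_graph_zero_prod (hL : ∀ᶠ t in 𝓝 t₀, DifferentiableAt 𝕜 L (t, z t))
    (hstat : ∀ᶠ t in 𝓝 t₀, fderiv 𝕜 (fun ζ => L (t, ζ)) (z t) = 0)
    (hz : DifferentiableAt 𝕜 z t₀)
    (hL₂ : DifferentiableAt 𝕜 (fderiv 𝕜 L) (t₀, z t₀)) (u : E) (m : F) :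
    fderiv 𝕜 (fderiv 𝕜 L) (t₀, z t₀) (u, fderiv 𝕜 z t₀ u) (0, m) = 0 := by
  have hpartial : (fun t => fderiv 𝕜 L (t, z t) (0, m)) =ᶠ[𝓝 t₀] fun _ => (0 : G) := by
    filter_upwards [hL, hstat] with t hLt hstatt
    rw [fderiv_apply_zero_prod hLt, hstatt, zero_apply]
  have hgraph : DifferentiableAt 𝕜 (fun t => fderiv 𝕜 L (t, z t)) t₀ :=
    hL₂.comp t₀ (differentiableAt_id.prodMk hz)
  calc fderiv 𝕜 (fderiv 𝕜 L) (t₀, z t₀) (u, fderiv 𝕜 z t₀ u) (0, m)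
      = fderiv 𝕜 (fun t => fderiv 𝕜 L (t, z t) (0, m)) t₀ u := by
        rw [fderiv_clm_apply_const hgraph, fderiv_comp_graph_apply hL₂ hz]
    _ = 0 := by rw [hpartial.fderiv_eq, fderiv_const_apply, zero_apply]

theorem fderiv_fderiv_profile_apply (hL : ∀ᶠ t in 𝓝 t₀, DifferentiableAt 𝕜 L (t, z t))
    (hstat : ∀ᶠ t in 𝓝 t₀, fderiv 𝕜 (fun ζ => L (t, ζ)) (z t) = 0)
    (hz : ∀ᶠ t in 𝓝 t₀, DifferentiableAt 𝕜 z t)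
    (hL₂ : DifferentiableAt 𝕜 (fderiv 𝕜 L) (t₀, z t₀)) (u v : E) :
    fderiv 𝕜 (fun t => fderiv 𝕜 (fun s => L (s, z s)) t v) t₀ u =
      fderiv 𝕜 (fderiv 𝕜 L) (t₀, z t₀) (u, fderiv 𝕜 z t₀ u) (v, fderiv 𝕜 z t₀ v) := by
  have hz₀ := hz.self_of_nhds
  have hgraph : DifferentiableAt 𝕜 (fun t => fderiv 𝕜 L (t, z t)) t₀ :=
    hL₂.comp t₀ (differentiableAt_id.prodMk hz₀)
  calc fderiv 𝕜 (fun t => fderiv 𝕜 (fun s => L (s, z s)) t v) t₀ u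
      = fderiv 𝕜 (fun t => fderiv 𝕜 L (t, z t) (v, 0)) t₀ u := by
        rw [(fderiv_profile_eventuallyEq hL hstat hz v).fderiv_eq]
    _ = fderiv 𝕜 (fderiv 𝕜 L) (t₀, z t₀) (u, fderiv 𝕜 z t₀ u) (v, 0) := by
        rw [fderiv_clm_apply_const hgraph, fderiv_comp_graph_apply hL₂ hz₀]
    _ = _ := by
        rw [← zero_add (fderiv 𝕜 z t₀ v), ← add_zero v, ← Prod.mk_add_mk, map_add,
          fderiv_fderiv_apply_graph_zero_prod hL hstat hz₀ hL₂, add_zero, add_zero]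

end Profile

theorem profile_hessian_congruence_posDef_general {d p : ℕ}
    (U : Set (Fin d → ℝ)) (W : Set (Fin p → ℝ)) (hU : IsOpen U) (hW : IsOpen W)
    (l : (Fin d → ℝ) → (Fin p → ℝ) → ℝ)
    (hl : ContDiffOn ℝ 2 (fun q : (Fin d → ℝ) × (Fin p → ℝ) => l q.1 q.2) (U ×ˢ W))
    (lam₀ : Fin d → ℝ) (hlam₀ : lam₀ ∈ U)
    (zhat : (Fin d → ℝ) → (Fin p → ℝ)) (hzW : zhat lam₀ ∈ W)
    (hz1 : DifferentiableOn ℝ zhat U)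
    (hstat : ∀ lam ∈ U, fderiv ℝ (l lam) (zhat lam) = 0)
    (hPD : ∀ w : (Fin d → ℝ) × (Fin p → ℝ), w ≠ 0 →
      fderiv ℝ (fun q => fderiv ℝ (fun q' : (Fin d → ℝ) × (Fin p → ℝ) => l q'.1 q'.2) q w)
        (lam₀, zhat lam₀) w < 0) :
    (∀ u v : Fin d → ℝ,
      fderiv ℝ (fun t => fderiv ℝ (fun s => l s (zhat s)) t v) lam₀ u =
        fderiv ℝ (fun q => fderiv ℝ (fun q' : (Fin d → ℝ) × (Fin p → ℝ) => l q'.1 q'.2) q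
            (v, fderiv ℝ zhat lam₀ v)) (lam₀, zhat lam₀) (u, fderiv ℝ zhat lam₀ u)) ∧
    (∀ u : Fin d → ℝ, u ≠ 0 →
      fderiv ℝ (fun t => fderiv ℝ (fun s => l s (zhat s)) t u) lam₀ u < 0) := by
  set L : (Fin d → ℝ) × (Fin p → ℝ) → ℝ := fun q => l q.1 q.2
  have hUW : U ×ˢ W ∈ 𝓝 (lam₀, zhat lam₀) := (hU.prod hW).mem_nhds ⟨hlam₀, hzW⟩
  have hgraph_mem : ∀ᶠ t in 𝓝 lam₀, t ∈ U ∧ zhat t ∈ W :=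
    (hz1.continuousOn.isOpen_inter_preimage hU hW).mem_nhds ⟨hlam₀, hzW⟩
  have hL : ∀ᶠ t in 𝓝 lam₀, DifferentiableAt ℝ L (t, zhat t) := by
    filter_upwards [hgraph_mem] with t ht
    exact (hl.differentiableOn two_ne_zero).differentiableAt ((hU.prod hW).mem_nhds ht)
  have hz : ∀ᶠ t in 𝓝 lam₀, DifferentiableAt ℝ zhat t := by
    filter_upwards [hU.mem_nhds hlam₀] with t ht
    exact hz1.differentiableAt (hU.mem_nhds ht)
  have hL₂ : DifferentiableAt ℝ (fderiv ℝ L) (lam₀, zhat lam₀) :=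
    ((hl.contDiffAt hUW).fderiv_right le_rfl).differentiableAt one_ne_zero
  have hhess (u v : Fin d → ℝ) :=
    fderiv_fderiv_profile_apply hL (eventually_of_mem (hU.mem_nhds hlam₀) hstat) hz hL₂ u v
  refine ⟨fun u v => by rw [hhess, fderiv_clm_apply_const hL₂], fun u hu => ?_⟩
  rw [hhess, ← fderiv_clm_apply_const hL₂]
  exact hPD _ fun h => hu (congrArg Prod.fst h)

/-- profile Hessian as a congruence transform; positive definiteness.
If `l` is C² on the open set `U × W`, `ẑ` is twice differentiable with the first-order
condition `∂l/∂ζ (λ, ẑ(λ)) = 0` on `U`, and the negative full Hessian of `l` at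
`(lam₀, ẑ(lam₀))` is positive definite, then the Hessian bilinear form of the profiled
function `l̂(λ) = l(λ, ẑ(λ))` at `lam₀` equals the full Hessian evaluated along the
directions `(u, ẑ'(lam₀)u)`, and `-l̂''(lam₀)` is positive definite. -/
theorem profile_hessian_congruence_posDef {d p : ℕ}
    (U : Set (Fin d → ℝ)) (W : Set (Fin p → ℝ)) (hU : IsOpen U) (hW : IsOpen W)
    (l : (Fin d → ℝ) → (Fin p → ℝ) → ℝ)
    (hl : ContDiffOn ℝ 2 (fun q : (Fin d → ℝ) × (Fin p → ℝ) => l q.1 q.2) (U ×ˢ W))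
    (lam₀ : Fin d → ℝ) (hlam₀ : lam₀ ∈ U)
    (zhat : (Fin d → ℝ) → (Fin p → ℝ)) (hzW : zhat lam₀ ∈ W)
    (hz1 : DifferentiableOn ℝ zhat U)
    (hz2 : DifferentiableOn ℝ (fderiv ℝ zhat) U)
    (hstat : ∀ lam ∈ U, fderiv ℝ (l lam) (zhat lam) = 0)
    (hPD : ∀ w : (Fin d → ℝ) × (Fin p → ℝ), w ≠ 0 →
      fderiv ℝ (fun q => fderiv ℝ (fun q' : (Fin d → ℝ) × (Fin p → ℝ) => l q'.1 q'.2) q w)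
        (lam₀, zhat lam₀) w < 0) :
    (∀ u v : Fin d → ℝ,
      fderiv ℝ (fun t => fderiv ℝ (fun s => l s (zhat s)) t v) lam₀ u =
        fderiv ℝ (fun q => fderiv ℝ (fun q' : (Fin d → ℝ) × (Fin p → ℝ) => l q'.1 q'.2) q
            (v, fderiv ℝ zhat lam₀ v)) (lam₀, zhat lam₀) (u, fderiv ℝ zhat lam₀ u)) ∧
    (∀ u : Fin d → ℝ, u ≠ 0 →
      fderiv ℝ (fun t => fderiv ℝ (fun s => l s (zhat s)) t u) lam₀ u < 0) :=
  profile_hessian_congruence_posDef_general U W hU hW l hl lam₀ hlam₀ zhat hzW hz1 hstat hPD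
end

section
/- Let Θ ⊆ ℝ^d be open with λ₀ ∈ Θ, let H be a real normed vector space with a point ζ₀ ∈ H. Let l_n: Θ × H → ℝ, let ẑ_n: Θ → H satisfy l_n(λ, ẑ_n(λ)) = sup_{ζ∈H} l_n(λ, ζ) for every λ and n, and let ζ̃: Θ × Θ × H → H satisfy ζ̃(λ, λ, ζ) = ζ; define l̂_n(λ) = l_n(λ, ẑ_n(λ)) and l̃_n(t, λ, ζ) = l_n(t, ζ̃(t, λ, ζ)), assumed twice continuously differentiable in t. Suppose there exist: an open neighborhood V ⊆ Θ × Θ × H of (λ₀, λ₀, ζ₀); a symmetric matrix H₀ ∈ ℝ^{d×d}; vectors h_n ∈ ℝ^d; functions m_n: Θ × Θ × H → ℝ^d; sequences a_n, b_n, c_n → 0; and an open neighborhood U ⊆ Θ of λ₀, such that for all n: (i) sup_{(t,λ,ζ)∈V} ‖∂²l̃_n(t,λ,ζ)/∂t² + H₀‖ ≤ a_n; (ii) sup_{(t,λ,ζ)∈V} √n ‖∂l̃_n(t,λ,ζ)/∂t − m_n(t,λ,ζ) − h_n‖ ≤ b_n; (iii) ‖m_n(λ₀, λ, ẑ_n(λ))‖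 ≤ c_n (‖λ − λ₀‖ + n^{−1/2}) for all λ ∈ U; and (iv) for every neighborhood W of ζ₀ there exist ε' > 0 and N such that ẑ_n(λ) ∈ W whenever n ≥ N and ‖λ − λ₀‖ < ε'. Then there exist ε > 0, N ∈ ℕ, and a sequence d_n → 0 such that for all n ≥ N and all λ with ‖λ − λ₀‖ < ε: |l̂_n(λ) − l̂_n(λ₀) − (λ − λ₀)⊤h_n + (1/2)(λ − λ₀)⊤H₀(λ − λ₀)| ≤ d_n (‖λ − λ₀‖ + n^{−1/2})². -/
/-!
Since `ẑ_n(λ)` maximises `l_n(λ, ·)` and the submodel `ζ̃` passes through `ζ` at `t = λ`, the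
profile increment `l̂_n(λ) - l̂_n(λ₀)` is squeezed between the increments from `λ₀` to `λ` of the
two submodels `t ↦ l̃_n(t, λ₀, ẑ_n(λ₀))` and `t ↦ l̃_n(t, λ, ẑ_n(λ))`. Each of these is expanded
to second order at `λ₀`: (i) controls the Taylor remainder, (ii) replaces the score by
`m_n + h_n`, and (iii) makes `m_n` negligible, while (iv) keeps both nuisance points inside `V`.
-/

open Filter Topology
open Set RealInnerProductSpace

/-- The remainder `g s - s g'(0) + s² Q / 2` has a derivative vanishing at `0` whose own derivative
is `g'' + Q`, so two mean-value estimates on `[0, 1]` bound it. -/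
theorem abs_sub_sub_add_half_le_of_hasDerivAt {g g' g'' : ℝ → ℝ} {Q A : ℝ}
    (hg : ∀ s, HasDerivAt g (g' s) s) (hg' : ∀ s, HasDerivAt g' (g'' s) s)
    (hbound : ∀ s ∈ Icc (0 : ℝ) 1, |g'' s + Q| ≤ A) :
    |g 1 - g 0 - g' 0 + Q / 2| ≤ A := by
  have hA : 0 ≤ A := (abs_nonneg _).trans (hbound 0 (left_mem_Icc.2 zero_le_one))
  let φ' : ℝ → ℝ := fun s => g' s - g' 0 + s * Q
  have hφ' : ∀ s, HasDerivAt φ' (g'' s + Q) s := fun s =>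
    ((hg' s).sub_const _).add (hasDerivAt_mul_const Q)
  have hφ'_le : ∀ s ∈ Icc (0 : ℝ) 1, ‖φ' s‖ ≤ A := fun s hs => by
    have := norm_image_sub_le_of_norm_deriv_le_segment' (fun x _ => (hφ' x).hasDerivWithinAt)
      (fun x hx => hbound x (Ico_subset_Icc_self hx)) s hs
    simp only [φ', sub_self, zero_mul, add_zero, sub_zero] at this
    nlinarith [hs.2]
  have hφ : ∀ s, HasDerivAt (fun s => g s - s * g' 0 + s ^ 2 / 2 * Q) (φ' s) s := fun s =>
    (((hg s).sub ((hasDerivAt_id' s).mul_const (g' 0))).add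
      (((hasDerivAt_pow 2 s).div_const 2).mul_const Q)).congr_deriv (by simp [φ'])
  have := norm_image_sub_le_of_norm_deriv_le_segment_01' (fun x _ => (hφ x).hasDerivWithinAt)
    fun x hx => hφ'_le x (Ico_subset_Icc_self hx)
  rw [Real.norm_eq_abs] at this
  convert this using 2; ring

theorem ContDiff.abs_sub_sub_fderiv_add_half_le {E : Type*} [NormedAddCommGroup E]
    [NormedSpace ℝ E] {f : E → ℝ} (hf : ContDiff ℝ 2 f) (x v : E) {Q A : ℝ}
    (hbound : ∀ s ∈ Icc (0 : ℝ) 1,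
      |fderiv ℝ (fun y => fderiv ℝ f y v) (x + s • v) v + Q| ≤ A) :
    |f (x + v) - f x - fderiv ℝ f x v + Q / 2| ≤ A := by
  have hline : ∀ s : ℝ, HasDerivAt (fun s : ℝ => x + s • v) v s := fun s => by
    simpa using ((hasDerivAt_id s).smul_const v).const_add x
  have hDf : Differentiable ℝ (fun y => fderiv ℝ f y v) :=
    ((hf.fderiv_right le_rfl).differentiable one_ne_zero).clm_apply (differentiable_const v)
  simpa using abs_sub_sub_add_half_le_of_hasDerivAt
    (fun s => ((hf.differentiable two_ne_zero) _).hasFDerivAt.comp_hasDerivAt s (hline s))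
    (fun s => (hDf _).hasFDerivAt.comp_hasDerivAt s (hline s)) hbound

theorem ContDiff.abs_sub_sub_inner_sub_half_le {E : Type*} [NormedAddCommGroup E]
    [InnerProductSpace ℝ E] [CompleteSpace E] {f : E → ℝ} (hf : ContDiff ℝ 2 f)
    {x v h m : E} {Q a b c t : ℝ} (ht : 0 ≤ t)
    (hhess : ∀ s ∈ Icc (0 : ℝ) 1,
      |fderiv ℝ (fun y => fderiv ℝ f y v) (x + s • v) v + Q| ≤ a * ‖v‖ * ‖v‖)
    (hgrad : ‖gradient f x - m - h‖ ≤ b * t) (hm : ‖m‖ ≤ c * (‖v‖ + t)) :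
    |f (x + v) - f x - (⟪h, v⟫ - Q / 2)| ≤ (|a| + |b| + |c|) * (‖v‖ + t) ^ 2 := by
  have hscore : fderiv ℝ f x v = ⟪gradient f x - m - h, v⟫ + ⟪m, v⟫ + ⟪h, v⟫ := by
    rw [← inner_gradient_left, inner_sub_left, inner_sub_left]; ring
  have hv := norm_nonneg v
  calc |f (x + v) - f x - (⟪h, v⟫ - Q / 2)|
      = |(f (x + v) - f x - fderiv ℝ f x v + Q / 2) + ⟪gradient f x - m - h, v⟫ + ⟪m, v⟫| := by
        rw [hscore]; ring_nf
    _ ≤ |a| * ‖v‖ * ‖v‖ + |b| * t * ‖v‖ + |c| * (‖v‖ + t) * ‖v‖ := by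
        refine (abs_add_three _ _ _).trans (add_le_add_three ?_ ?_ ?_)
        · refine hf.abs_sub_sub_fderiv_add_half_le x v fun s hs => (hhess s hs).trans ?_
          gcongr; exact le_abs_self a
        · refine (abs_real_inner_le_norm _ _).trans (mul_le_mul_of_nonneg_right ?_ hv)
          exact hgrad.trans (by gcongr; exact le_abs_self b)
        · refine (abs_real_inner_le_norm _ _).trans (mul_le_mul_of_nonneg_right ?_ hv)
          exact hm.trans (by gcongr; exact le_abs_self c)
    _ ≤ (|a| + |b| + |c|) * (‖v‖ + t) ^ 2 := by
        have hvt := add_nonneg hv ht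
        nlinarith [mul_nonneg (abs_nonneg a) (mul_nonneg ht (add_nonneg hv hvt)),
          mul_nonneg (abs_nonneg b) (add_nonneg (mul_nonneg hv hvt) (mul_nonneg ht ht)),
          mul_nonneg (abs_nonneg c) (mul_nonneg hvt ht)]

theorem abs_profile_sub_sub_le_of_submodel {X Y : Type*} (L : X → Y → ℝ) (zhat : X → Y)
    (hsup : ∀ x y, L x y ≤ L x (zhat x)) (ζt : X → X → Y → Y) (hpass : ∀ x y, ζt x x y = y)
    {x₀ x : X} {T R : ℝ}
    (h₀ : |L x (ζt x x₀ (zhat x₀)) - L x₀ (ζt x₀ x₀ (zhat x₀)) - T| ≤ R)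
    (h₁ : |L x (ζt x x (zhat x)) - L x₀ (ζt x₀ x (zhat x)) - T| ≤ R) :
    |L x (zhat x) - L x₀ (zhat x₀) - T| ≤ R := by
  rw [hpass] at h₀ h₁
  have := hsup x (ζt x x₀ (zhat x₀))
  have := hsup x₀ (ζt x₀ x (zhat x))
  rw [abs_le] at *
  constructor <;> linarith

theorem profile_loglikelihood_LAN_general {d : ℕ} {H : Type*}
    [NormedAddCommGroup H] [NormedSpace ℝ H]
    (lam₀ : EuclideanSpace ℝ (Fin d)) (ζ₀ : H)
    (l : ℕ → EuclideanSpace ℝ (Fin d) → H → ℝ)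
    (zhat : ℕ → EuclideanSpace ℝ (Fin d) → H)
    -- ẑ_n(λ) attains the profile supremum
    (hsup : ∀ (n : ℕ) (lam : EuclideanSpace ℝ (Fin d)) (ζ : H),
      l n lam ζ ≤ l n lam (zhat n lam))
    -- submodel map, passing through ζ at t = λ
    (ζt : EuclideanSpace ℝ (Fin d) → EuclideanSpace ℝ (Fin d) → H → H)
    (hpass : ∀ (lam : EuclideanSpace ℝ (Fin d)) (ζ : H), ζt lam lam ζ = ζ)
    (hsmooth : ∀ (n : ℕ) (lam : EuclideanSpace ℝ (Fin d)) (ζ : H),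
      ContDiff ℝ 2 (fun t => l n t (ζt t lam ζ)))
    -- neighborhood V of (λ₀, λ₀, ζ₀)
    (V : Set (EuclideanSpace ℝ (Fin d) × EuclideanSpace ℝ (Fin d) × H))
    (hVopen : IsOpen V) (hVmem : (lam₀, lam₀, ζ₀) ∈ V)
    (H₀ : Matrix (Fin d) (Fin d) ℝ)
    (h : ℕ → EuclideanSpace ℝ (Fin d))
    (m : ℕ → EuclideanSpace ℝ (Fin d) → EuclideanSpace ℝ (Fin d) → H →
      EuclideanSpace ℝ (Fin d))
    (a b c : ℕ → ℝ)
    (ha : Tendsto a atTop (𝓝 0)) (hb : Tendsto b atTop (𝓝 0))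
    (hc : Tendsto c atTop (𝓝 0))
    -- neighborhood U of λ₀
    (U : Set (EuclideanSpace ℝ (Fin d))) (hUopen : IsOpen U) (hUmem : lam₀ ∈ U)
    -- (i) uniform convergence of the second derivative of the submodel to -H₀
    (hyp1 : ∀ n : ℕ, ∀ q ∈ V, ∀ u v : EuclideanSpace ℝ (Fin d),
      |fderiv ℝ (fun t => fderiv ℝ (fun t' => l n t' (ζt t' q.2.1 q.2.2)) t v) q.1 u +
          ∑ i, ∑ j, u i * H₀ i j * v j| ≤ a n * ‖u‖ * ‖v‖)
    -- (ii) uniform approximation of the centered score by h_n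
    (hyp2 : ∀ n : ℕ, ∀ q ∈ V,
      Real.sqrt n *
          ‖gradient (fun t => l n t (ζt t q.2.1 q.2.2)) q.1 - m n q.1 q.2.1 q.2.2 - h n‖ ≤
        b n)
    -- (iii) the expected score at t = λ₀ along the profiled path is negligible
    (hyp3 : ∀ n : ℕ, ∀ lam ∈ U,
      ‖m n lam₀ lam (zhat n lam)‖ ≤ c n * (‖lam - lam₀‖ + (Real.sqrt n)⁻¹))
    -- (iv) consistency of ẑ_n(λ) as λ → λ₀ and n → ∞
    (hyp4 : ∀ W ∈ 𝓝 ζ₀, ∃ ε' > (0 : ℝ), ∃ N : ℕ, ∀ n ≥ N,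
      ∀ lam : EuclideanSpace ℝ (Fin d), ‖lam - lam₀‖ < ε' → zhat n lam ∈ W) :
    ∃ ε > (0 : ℝ), ∃ N : ℕ, ∃ r : ℕ → ℝ, Tendsto r atTop (𝓝 0) ∧
      ∀ n ≥ N, ∀ lam : EuclideanSpace ℝ (Fin d), ‖lam - lam₀‖ < ε →
        |l n lam (zhat n lam) - l n lam₀ (zhat n lam₀) -
            (∑ i, (lam i - lam₀ i) * h n i) +
            (1 / 2) * ∑ i, ∑ j, (lam i - lam₀ i) * H₀ i j * (lam j - lam₀ j)| ≤
          r n * (‖lam - lam₀‖ + (Real.sqrt n)⁻¹) ^ 2 := by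
  obtain ⟨δ, hδ, hVball⟩ := Metric.isOpen_iff.mp hVopen _ hVmem
  obtain ⟨ε', hε', N₀, hzhat⟩ := hyp4 _ (Metric.ball_mem_nhds ζ₀ hδ)
  obtain ⟨εU, hεU, hUball⟩ := Metric.isOpen_iff.mp hUopen lam₀ hUmem
  refine ⟨min δ (min ε' εU), by positivity, max N₀ 1, fun n => |a n| + |b n| + |c n|,
    by simpa using (ha.abs.add hb.abs).add hc.abs, fun n hn lam hlam => ?_⟩
  obtain ⟨hnN₀, hn1⟩ := max_le_iff.mp hn
  simp only [lt_min_iff] at hlam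
  obtain ⟨hlamδ, hlamε', hlamεU⟩ := hlam
  have hsqrt : 0 < √(n : ℝ) := Real.sqrt_pos.2 (by exact_mod_cast hn1)
  have expansion : ∀ p z, dist p lam₀ < δ → dist z ζ₀ < δ →
      ‖m n lam₀ p z‖ ≤ c n * (‖lam - lam₀‖ + (√n)⁻¹) →
      |l n lam (ζt lam p z) - l n lam₀ (ζt lam₀ p z) -
          (⟪h n, lam - lam₀⟫ - (∑ i, ∑ j, (lam - lam₀) i * H₀ i j * (lam - lam₀) j) / 2)| ≤
        (|a n| + |b n| + |c n|) * (‖lam - lam₀‖ + (√n)⁻¹) ^ 2 := by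
    intro p z hp hz hm
    have hV : ∀ t ∈ Metric.ball lam₀ δ, (t, p, z) ∈ V := fun t ht =>
      hVball (by simp [Prod.dist_eq, Metric.mem_ball.1 ht, hp, hz])
    have hgrad := hyp2 n _ (hV lam₀ (Metric.mem_ball_self hδ))
    rw [mul_comm, ← le_div_iff₀ hsqrt, div_eq_mul_inv] at hgrad
    simpa using (hsmooth n p z).abs_sub_sub_inner_sub_half_le (by positivity)
      (fun s hs => hyp1 n _ (hV _ ((convex_ball lam₀ δ).add_smul_mem (Metric.mem_ball_self hδ)
        (by simpa [dist_eq_norm] using hlamδ) hs)) _ _) hgrad hm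
  have hlin : ∑ i, (lam i - lam₀ i) * h n i = ⟪h n, lam - lam₀⟫ := by
    simp [PiLp.inner_apply]
  rw [hlin, show ∀ x y z w : ℝ, x - y - z + 1 / 2 * w = x - y - (z - w / 2) by intros; ring]
  have hm₀ : ‖m n lam₀ lam₀ (zhat n lam₀)‖ ≤ c n * (‖lam - lam₀‖ + (√n)⁻¹) := by
    have h₀ := hyp3 n lam₀ hUmem
    rw [sub_self, norm_zero, zero_add] at h₀
    have hc : 0 ≤ c n := nonneg_of_mul_nonneg_left ((norm_nonneg _).trans h₀) (inv_pos.2 hsqrt)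
    exact h₀.trans (by gcongr; exact le_add_of_nonneg_left (norm_nonneg _))
  exact abs_profile_sub_sub_le_of_submodel (l n) (zhat n) (hsup n) ζt hpass
    (expansion _ _ (by simpa using hδ) (hzhat n hnN₀ lam₀ (by simpa using hε')) hm₀)
    (expansion _ _ (by rwa [dist_eq_norm]) (hzhat n hnN₀ lam hlamε')
      (hyp3 n lam (hUball (by rwa [Metric.mem_ball, dist_eq_norm]))))

/-- deterministic form of Lemma 1: local asymptotic normality of the
profile log-likelihood. Under the approximately-least-favorable-submodel conditions
(i)–(iv), the profile log-likelihood `l̂_n(λ) = l_n(λ, ẑ_n(λ))` admits the quadratic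
LAN expansion around `λ₀` with score `h_n` and curvature `H₀`, with remainder
`o(1)(‖λ-λ₀‖ + n^{-1/2})²` uniformly on a neighborhood of `λ₀`. -/
theorem profile_loglikelihood_LAN {d : ℕ} {H : Type*}
    [NormedAddCommGroup H] [NormedSpace ℝ H]
    (Θ : Set (EuclideanSpace ℝ (Fin d))) (hΘ : IsOpen Θ)
    (lam₀ : EuclideanSpace ℝ (Fin d)) (hlam₀ : lam₀ ∈ Θ) (ζ₀ : H)
    (l : ℕ → EuclideanSpace ℝ (Fin d) → H → ℝ)
    (zhat : ℕ → EuclideanSpace ℝ (Fin d) → H)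
    -- ẑ_n(λ) attains the profile supremum
    (hsup : ∀ (n : ℕ) (lam : EuclideanSpace ℝ (Fin d)) (ζ : H),
      l n lam ζ ≤ l n lam (zhat n lam))
    -- submodel map, passing through ζ at t = λ
    (ζt : EuclideanSpace ℝ (Fin d) → EuclideanSpace ℝ (Fin d) → H → H)
    (hpass : ∀ (lam : EuclideanSpace ℝ (Fin d)) (ζ : H), ζt lam lam ζ = ζ)
    (hsmooth : ∀ (n : ℕ) (lam : EuclideanSpace ℝ (Fin d)) (ζ : H),
      ContDiff ℝ 2 (fun t => l n t (ζt t lam ζ)))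
    -- neighborhood V of (λ₀, λ₀, ζ₀)
    (V : Set (EuclideanSpace ℝ (Fin d) × EuclideanSpace ℝ (Fin d) × H))
    (hVopen : IsOpen V) (hVmem : (lam₀, lam₀, ζ₀) ∈ V)
    (H₀ : Matrix (Fin d) (Fin d) ℝ) (hH₀symm : H₀.IsSymm)
    (h : ℕ → EuclideanSpace ℝ (Fin d))
    (m : ℕ → EuclideanSpace ℝ (Fin d) → EuclideanSpace ℝ (Fin d) → H →
      EuclideanSpace ℝ (Fin d))
    (a b c : ℕ → ℝ)
    (ha : Tendsto a atTop (𝓝 0)) (hb : Tendsto b atTop (𝓝 0))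
    (hc : Tendsto c atTop (𝓝 0))
    -- neighborhood U of λ₀
    (U : Set (EuclideanSpace ℝ (Fin d))) (hUopen : IsOpen U) (hUmem : lam₀ ∈ U)
    (hUΘ : U ⊆ Θ)
    -- (i) uniform convergence of the second derivative of the submodel to -H₀
    (hyp1 : ∀ n : ℕ, ∀ q ∈ V, ∀ u v : EuclideanSpace ℝ (Fin d),
      |fderiv ℝ (fun t => fderiv ℝ (fun t' => l n t' (ζt t' q.2.1 q.2.2)) t v) q.1 u +
          ∑ i, ∑ j, u i * H₀ i j * v j| ≤ a n * ‖u‖ * ‖v‖)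
    -- (ii) uniform approximation of the centered score by h_n
    (hyp2 : ∀ n : ℕ, ∀ q ∈ V,
      Real.sqrt n *
          ‖gradient (fun t => l n t (ζt t q.2.1 q.2.2)) q.1 - m n q.1 q.2.1 q.2.2 - h n‖ ≤
        b n)
    -- (iii) the expected score at t = λ₀ along the profiled path is negligible
    (hyp3 : ∀ n : ℕ, ∀ lam ∈ U,
      ‖m n lam₀ lam (zhat n lam)‖ ≤ c n * (‖lam - lam₀‖ + (Real.sqrt n)⁻¹))
    -- (iv) consistency of ẑ_n(λ) as λ → λ₀ and n → ∞
    (hyp4 : ∀ W ∈ 𝓝 ζ₀, ∃ ε' > (0 : ℝ), ∃ N : ℕ, ∀ n ≥ N,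
      ∀ lam : EuclideanSpace ℝ (Fin d), ‖lam - lam₀‖ < ε' → zhat n lam ∈ W) :
    ∃ ε > (0 : ℝ), ∃ N : ℕ, ∃ r : ℕ → ℝ, Tendsto r atTop (𝓝 0) ∧
      ∀ n ≥ N, ∀ lam : EuclideanSpace ℝ (Fin d), ‖lam - lam₀‖ < ε →
        |l n lam (zhat n lam) - l n lam₀ (zhat n lam₀) -
            (∑ i, (lam i - lam₀ i) * h n i) +
            (1 / 2) * ∑ i, ∑ j, (lam i - lam₀ i) * H₀ i j * (lam j - lam₀ j)| ≤
          r n * (‖lam - lam₀‖ + (Real.sqrt n)⁻¹) ^ 2 :=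
  profile_loglikelihood_LAN_general lam₀ ζ₀ l zhat hsup ζt hpass hsmooth V hVopen hVmem H₀ h m a b c
    ha hb hc U hUopen hUmem hyp1 hyp2 hyp3 hyp4
end

section
/- Fix y ∈ {0,1}^n and distinct points x_1,…,x_n ∈ ℝ^{d̃}. For τ, b > 0 let Q(τ,b) be the symmetric positive definite matrix with entries Q(τ,b)_{ij} = τ exp(−‖x_i − x_j‖²/(2b)), and define the profile likelihood kernel F(τ, b) = sup_{ζ ∈ ℝ^n} exp{−(1/2) ζ⊤Q(τ,b)^{−1}ζ} ∏_{i=1}^n exp(y_i ζ_i)/(1 + exp(ζ_i)). Assume F is measurable. If the prior on (τ,b) is π₀(dτ, db) = c e^{−c₁τ²} dτ ⊗ μ_b(db) for some constant c₁ > 0, normalizing constant c, and any probability measure μ_b on (0,∞), then ∫_0^∞ ∫_0^∞ F(τ,b) π₀(dτ, db) < ∞; that is, the bridged posterior of the latent quadratic exponential model is proper. -/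
open Matrix MeasureTheory

/-!
The Gaussian kernel matrix is positive semidefinite: it is a diagonal congruence of the entrywise
exponential of a Gram matrix, and entrywise exponentials of positive semidefinite matrices stay
positive semidefinite because every term `A^{⊙k}/k!` of the series is (Schur product theorem).
Hence `Q(τ,b)⁻¹` is positive semidefinite, so the Gaussian factor of the profile likelihood is at
most `1`, and so is every logistic factor. Thus `0 ≤ F ≤ 1`, and `F` is dominated by the
integrable prior density.
-/

namespace Matrix

variable {ι : Type*} [Fintype ι] {A : Matrix ι ι ℝ}

theorem PosSemidef.map_pow (hA : A.PosSemidef) (k : ℕ) : (A.map (· ^ k)).PosSemidef := by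
  induction k with
  | zero =>
    convert posSemidef_vecMulVec_self_star (1 : ι → ℝ) using 1
    ext
    simp [vecMulVec]
  | succ k ih =>
    have h : A.map (· ^ (k + 1)) = A.map (· ^ k) ⊙ A := by
      ext
      simp [pow_succ]
    exact h ▸ ih.hadamard hA

theorem PosSemidef.map_exp (hA : A.PosSemidef) : (A.map Real.exp).PosSemidef := by
  refine posSemidef_iff_dotProduct_mulVec.mpr ⟨hA.isHermitian.map _ fun _ => rfl, fun v => ?_⟩
  have hseries : ∀ t : ℝ, HasSum (fun k : ℕ => t ^ k / k.factorial) (Real.exp t) := fun t => by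
    simpa [Real.exp_eq_exp_ℝ] using NormedSpace.expSeries_div_hasSum_exp t
  have hsum : HasSum (fun k : ℕ => star v ⬝ᵥ ((k.factorial : ℝ)⁻¹ • A.map (· ^ k)) *ᵥ v)
      (star v ⬝ᵥ A.map Real.exp *ᵥ v) := by
    simp only [dotProduct, mulVec, smul_apply, map_apply, smul_eq_mul]
    refine hasSum_sum fun i _ => (hasSum_sum fun j _ => ?_).mul_left _
    simpa [div_eq_inv_mul, mul_assoc] using (hseries (A i j)).mul_right (v j)
  exact hsum.nonneg fun k =>
    ((hA.map_pow k).smul (by positivity)).dotProduct_mulVec_nonneg v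

theorem posSemidef_gaussianKernel {E : Type*} [NormedAddCommGroup E] [InnerProductSpace ℝ E]
    (x : ι → E) {b : ℝ} (hb : 0 ≤ b) :
    (of fun i j => Real.exp (-‖x i - x j‖ ^ 2 / (2 * b))).PosSemidef := by
  classical
  set d : ι → ℝ := fun i => Real.exp (-‖x i‖ ^ 2 / (2 * b))
  have h : (of fun i j => Real.exp (-‖x i - x j‖ ^ 2 / (2 * b)))
      = (diagonal d)ᴴ * (b⁻¹ • gram ℝ x).map Real.exp * diagonal d := by
    ext i j
    simp only [of_apply, diagonal_conjTranspose, diagonal_mul, mul_diagonal, map_apply,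
      smul_apply, gram_apply, smul_eq_mul, d, star_trivial, ← Real.exp_add]
    congr 1
    rw [norm_sub_sq_real]
    ring
  exact h ▸ (((posSemidef_gram ℝ x).smul (inv_nonneg.mpr hb)).map_exp.conjTranspose_mul_mul_same _)

end Matrix

theorem Real.exp_mul_div_one_add_exp_le_one {y : ℝ} (hy : y ∈ Set.Icc 0 1) (ζ : ℝ) :
    Real.exp (y * ζ) / (1 + Real.exp ζ) ≤ 1 := by
  rw [div_le_one (by positivity)]
  rcases le_total ζ 0 with hζ | hζ
  · have : Real.exp (y * ζ) ≤ 1 := Real.exp_le_one_iff.mpr (mul_nonpos_of_nonneg_of_nonpos hy.1 hζ)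
    linarith [Real.exp_pos ζ]
  · have : Real.exp (y * ζ) ≤ Real.exp ζ := Real.exp_le_exp.mpr (by nlinarith [hy.2])
    linarith

theorem norm_iSup_exp_neg_quadForm_mul_logisticLikelihood_le_one {ι : Type*} [Fintype ι]
    {P : Matrix ι ι ℝ} (hP : P.PosSemidef) {y : ι → ℝ} (hy : ∀ i, y i ∈ Set.Icc 0 1) :
    ‖⨆ ζ : ι → ℝ, Real.exp (-(1 / 2) * (ζ ⬝ᵥ P.mulVec ζ)) *
        ∏ i, Real.exp (y i * ζ i) / (1 + Real.exp (ζ i))‖ ≤ 1 := by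
  have hterm : ∀ ζ : ι → ℝ, Real.exp (-(1 / 2) * (ζ ⬝ᵥ P.mulVec ζ)) *
      ∏ i, Real.exp (y i * ζ i) / (1 + Real.exp (ζ i)) ∈ Set.Icc 0 1 := fun ζ => by
    have hquad : Real.exp (-(1 / 2) * (ζ ⬝ᵥ P.mulVec ζ)) ≤ 1 := by
      have := hP.dotProduct_mulVec_nonneg ζ
      simp only [star_trivial] at this
      exact Real.exp_le_one_iff.mpr (by linarith)
    have hfactor : ∀ i, Real.exp (y i * ζ i) / (1 + Real.exp (ζ i)) ∈ Set.Icc 0 1 := fun i =>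
      ⟨by positivity, Real.exp_mul_div_one_add_exp_le_one (hy i) (ζ i)⟩
    have hlik := Finset.prod_le_one (s := Finset.univ) (fun i _ => (hfactor i).1) (fun i _ => (hfactor i).2)
    exact ⟨by positivity, mul_le_one₀ hquad (Finset.prod_nonneg fun i _ => (hfactor i).1) hlik⟩
  rw [Real.norm_of_nonneg (Real.iSup_nonneg fun ζ => (hterm ζ).1)]
  exact Real.iSup_le (fun ζ => (hterm ζ).2) zero_le_one

theorem latent_quadratic_exponential_propriety_general {n dt : ℕ}
    (y : Fin n → ℝ) (hy : ∀ i, y i = 0 ∨ y i = 1)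
    (x : Fin n → EuclideanSpace ℝ (Fin dt))
    (Q : ℝ → ℝ → Matrix (Fin n) (Fin n) ℝ)
    (hQ : ∀ τ b, Q τ b = Matrix.of fun i j => τ * Real.exp (-‖x i - x j‖ ^ 2 / (2 * b)))
    (F : ℝ → ℝ → ℝ)
    (hF : F = fun τ b => ⨆ ζ : Fin n → ℝ,
      Real.exp (-(1 / 2) * (ζ ⬝ᵥ (Q τ b)⁻¹.mulVec ζ)) *
        ∏ i, Real.exp (y i * ζ i) / (1 + Real.exp (ζ i)))
    (hFmeas : Measurable (Function.uncurry F))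
    (c c₁ : ℝ) (hc₁ : 0 < c₁)
    (μb : Measure ℝ) [IsProbabilityMeasure μb] :
    IntegrableOn (fun q : ℝ × ℝ => F q.1 q.2 * (c * Real.exp (-c₁ * q.1 ^ 2)))
      (Set.Ioi 0 ×ˢ Set.Ioi 0) ((volume : Measure ℝ).prod μb) := by
  have hQinv : ∀ τ b : ℝ, 0 ≤ τ → 0 ≤ b → (Q τ b)⁻¹.PosSemidef := fun τ b hτ hb => by
    have h : Q τ b = τ • of fun i j => Real.exp (-‖x i - x j‖ ^ 2 / (2 * b)) := by
      rw [hQ]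
      rfl
    exact h ▸ ((posSemidef_gaussianKernel x hb).smul hτ).inv
  have hy' : ∀ i, y i ∈ Set.Icc 0 1 := fun i => by rcases hy i with h | h <;> simp [h]
  have hprior : Integrable (fun q : ℝ × ℝ => c * Real.exp (-c₁ * q.1 ^ 2))
      ((volume : Measure ℝ).prod μb) :=
    ((integrable_exp_neg_mul_sq hc₁).const_mul c).comp_fst μb
  refine hprior.integrableOn.bdd_mul (c := 1) hFmeas.aestronglyMeasurable ?_
  filter_upwards [ae_restrict_mem (measurableSet_Ioi.prod measurableSet_Ioi)] with q ⟨hτ, hb⟩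
  rw [hF]
  exact norm_iSup_exp_neg_quadForm_mul_logisticLikelihood_le_one
    (hQinv q.1 q.2 (le_of_lt hτ) (le_of_lt hb)) hy'

/-- propriety of the bridged posterior for the latent quadratic
exponential model. With binary data `y`, distinct locations `x_i`, Gaussian kernel
matrix `Q(τ,b)_{ij} = τ exp(-‖x_i-x_j‖²/(2b))`, profile likelihood kernel `F(τ,b)`,
and prior `c e^{-c₁τ²} dτ ⊗ μ_b`, the bridged posterior is proper: the kernel is
integrable over `(0,∞) × (0,∞)`. -/
theorem latent_quadratic_exponential_propriety {n dt : ℕ}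
    (y : Fin n → ℝ) (hy : ∀ i, y i = 0 ∨ y i = 1)
    (x : Fin n → EuclideanSpace ℝ (Fin dt)) (hx : Function.Injective x)
    (Q : ℝ → ℝ → Matrix (Fin n) (Fin n) ℝ)
    (hQ : ∀ τ b, Q τ b = Matrix.of fun i j => τ * Real.exp (-‖x i - x j‖ ^ 2 / (2 * b)))
    (F : ℝ → ℝ → ℝ)
    (hF : F = fun τ b => ⨆ ζ : Fin n → ℝ,
      Real.exp (-(1 / 2) * (ζ ⬝ᵥ (Q τ b)⁻¹.mulVec ζ)) *
        ∏ i, Real.exp (y i * ζ i) / (1 + Real.exp (ζ i)))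
    (hFmeas : Measurable (Function.uncurry F))
    (c c₁ : ℝ) (hc : 0 < c) (hc₁ : 0 < c₁)
    (hnorm : ∫ τ in Set.Ioi (0 : ℝ), c * Real.exp (-c₁ * τ ^ 2) = 1)
    (μb : Measure ℝ) [IsProbabilityMeasure μb] (hμb : μb (Set.Iic 0) = 0) :
    IntegrableOn (fun q : ℝ × ℝ => F q.1 q.2 * (c * Real.exp (-c₁ * q.1 ^ 2)))
      (Set.Ioi 0 ×ˢ Set.Ioi 0) ((volume : Measure ℝ).prod μb) :=
  latent_quadratic_exponential_propriety_general y hy x Q hQ F hF hFmeas c c₁ hc₁ μb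
end
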